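/- arXiv:2201.06359 — 5 statements merged into one kernel-verified Lean document; each statement's English description precedes it below -/
import Mathlib

section
/- Let A be a Banach algebra with rad(A) = rann(A) and A/rad(A) commutative, with a right identity, and let T be a right multiplier of A (T(ab) = a T(b) for all a, b). Then the following are equivalent: (i) T(A) ⊆ rad(A); (ii) T is spectrally infinitesimal; (iii) T is a derivation of A; (iv) T = 0. -/
open scoped ENNReal

/-- The right annihilator of a (possibly non-unital) algebra. -/
def rannSet (A : Type*) [NonUnitalNonAssocRing A] : Set A :=
  {c : A | ∀ a : A, a * c = 0}

/-- The Jacobson radical of a (possibly non-unital) Banach algebra, defined as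
`A ∩ rad(A¹)` via the unitization. -/
def radSet (A : Type*) [NonUnitalRing A] [Module ℂ A]
    [IsScalarTower ℂ A A] [SMulCommClass ℂ A A] : Set A :=
  {a : A | (a : Unitization ℂ A) ∈ Ideal.jacobson (⊥ : Ideal (Unitization ℂ A))}

/-- Spectral radius of an element of a (possibly non-unital) Banach algebra,
computed in the unitization. -/
noncomputable def sprad {A : Type*} [NonUnitalNormedRing A] [NormedSpace ℂ A]
    [IsScalarTower ℂ A A] [SMulCommClass ℂ A A] (a : A) : ℝ≥0∞ :=
  spectralRadius ℂ ((a : Unitization ℂ A))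

/-- The center of an algebra. -/
def centerSet (A : Type*) [Mul A] : Set A := {z : A | ∀ a : A, a * z = z * a}

/-- `apow a n = a ^ (n + 1)` (powers in a possibly non-unital algebra). -/
def apow {A : Type*} [Mul A] (a : A) : ℕ → A
  | 0 => a
  | n + 1 => apow a n * a

/-!
Since `e` is a right identity, `T a = a * T e`: `T` is right multiplication by `T e`. If
`T e ∈ rad A = rann A` this is zero, and a derivation of this form vanishes by the Leibniz rule
at `(a, e)`. Conversely, every left multiple `y * T a` in the unitization is again a value of `T`,
so when `T` is spectrally infinitesimal `1 + y * T a` is invertible, i.e. `T a ∈ rad A`.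
-/

section RightMultiplier

variable {A : Type*}

theorem apply_eq_mul_apply_of_mul_right_id [Mul A] {T : A → A}
    (hT : ∀ a b : A, T (a * b) = a * T b) {e : A} (he : ∀ a : A, a * e = a) (a : A) :
    T a = a * T e := by
  rw [← hT, he]

theorem eq_zero_of_map_mul_eq_add [NonUnitalNonAssocRing A] {T : A → A}
    (hT : ∀ a b : A, T (a * b) = a * T b) {e : A} (he : ∀ a : A, a * e = a)
    (hder : ∀ a b : A, T (a * b) = T a * b + a * T b) (a : A) : T a = 0 := by
  have h := hder a e
  rwa [he, he, ← apply_eq_mul_apply_of_mul_right_id hT he, left_eq_add] at h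

theorem Unitization.mul_inr_apply {R : Type*} [CommSemiring R] [NonUnitalSemiring A]
    [Module R A] [IsScalarTower R A A] [SMulCommClass R A A] {T : A →ₗ[R] A}
    (hT : ∀ a b : A, T (a * b) = a * T b) (y : Unitization R A) (a : A) :
    y * (T a : Unitization R A) = (T (y.fst • a + y.snd * a) : Unitization R A) := by
  rw [← Unitization.inl_fst_add_inr_snd_eq y, add_mul, Unitization.inl_mul_inr,
    ← Unitization.inr_mul, ← Unitization.inr_add, map_add, map_smul, hT]
  simp

end RightMultiplier

theorem isUnit_one_add_of_spectralRadius_eq_zero {𝕜 B : Type*} [NormedField 𝕜] [Ring B]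
    [Algebra 𝕜 B] {x : B} (h : spectralRadius 𝕜 x = 0) : IsUnit (1 + x) := by
  have : (-1 : 𝕜) ∈ resolventSet 𝕜 x :=
    spectrum.mem_resolventSet_of_spectralRadius_lt (by simp [h])
  rwa [spectrum.mem_resolventSet_iff, map_neg, map_one, ← neg_add', IsUnit.neg_iff] at this

theorem Ideal.mem_jacobson_bot_of_forall_isUnit_one_add_mul {R : Type*} [Ring R] {x : R}
    (h : ∀ y : R, IsUnit (1 + y * x)) : x ∈ Ideal.jacobson (⊥ : Ideal R) := by
  refine Ideal.mem_jacobson_iff.mpr fun y => ?_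
  obtain ⟨u, hu⟩ := h y
  refine ⟨↑u⁻¹, Ideal.mem_bot.mpr ?_⟩
  rw [mul_assoc, sub_eq_zero, ← mul_add_one, add_comm, ← hu, Units.inv_mul]

theorem apply_mem_radSet_of_sprad_apply_eq_zero {A : Type*} [NonUnitalNormedRing A]
    [NormedSpace ℂ A] [IsScalarTower ℂ A A] [SMulCommClass ℂ A A] {T : A →ₗ[ℂ] A}
    (hT : ∀ a b : A, T (a * b) = a * T b) (hsprad : ∀ a : A, sprad (T a) = 0) (a : A) :
    T a ∈ radSet A :=
  Ideal.mem_jacobson_bot_of_forall_isUnit_one_add_mul fun y => by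
    rw [Unitization.mul_inr_apply hT]
    exact isUnit_one_add_of_spectralRadius_eq_zero (hsprad _)

theorem right_multiplier_tfae_general {A : Type*} [NonUnitalNormedRing A] [NormedSpace ℂ A]
    [IsScalarTower ℂ A A] [SMulCommClass ℂ A A]
    (hrad : radSet A = rannSet A)
    (e : A) (he : ∀ a : A, a * e = a)
    (T : A →ₗ[ℂ] A) (hT : ∀ a b : A, T (a * b) = a * T b) :
    List.TFAE
      [ ∀ a : A, T a ∈ radSet A,
        ∀ a : A, sprad (T a) = 0,
        ∀ a b : A, T (a * b) = T a * b + a * T b,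
        T = 0 ] := by
  tfae_have 1 → 4
  | hmem => LinearMap.ext fun a => by
    have hTe : T e ∈ rannSet A := hrad ▸ hmem e
    rw [apply_eq_mul_apply_of_mul_right_id hT he, LinearMap.zero_apply]
    exact hTe a
  tfae_have 4 → 2
  | hzero => by simp [hzero, sprad]
  tfae_have 2 → 1 := apply_mem_radSet_of_sprad_apply_eq_zero hT
  tfae_have 4 → 3
  | hzero => by simp [hzero]
  tfae_have 3 → 4
  | hder => LinearMap.ext (eq_zero_of_map_mul_eq_add hT he hder)
  tfae_finish

theorem right_multiplier_tfae {A : Type*} [NonUnitalNormedRing A] [NormedSpace ℂ A]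
    [IsScalarTower ℂ A A] [SMulCommClass ℂ A A] [CompleteSpace A]
    (hrad : radSet A = rannSet A)
    (hcomm : ∀ a b : A, a * b - b * a ∈ radSet A)
    (e : A) (he : ∀ a : A, a * e = a)
    (T : A →ₗ[ℂ] A) (hT : ∀ a b : A, T (a * b) = a * T b) :
    List.TFAE
      [ ∀ a : A, T a ∈ radSet A,
        ∀ a : A, sprad (T a) = 0,
        ∀ a b : A, T (a * b) = T a * b + a * T b,
        T = 0 ] :=
  right_multiplier_tfae_general hrad e he T hT
end

section
/- Let A be a Banach algebra with rad(A) = rann(A) and A/rad(A) commutative. Then the center Z(A) is a closed (two-sided) ideal of A. -/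
open scoped ENNReal

theorem center_is_closed_ideal {A : Type*} [NonUnitalNormedRing A] [NormedSpace ℂ A]
    [IsScalarTower ℂ A A] [SMulCommClass ℂ A A] [CompleteSpace A]
    (hrad : radSet A = rannSet A)
    (hcomm : ∀ a b : A, a * b - b * a ∈ radSet A) :
    IsClosed (centerSet A) ∧
      (0 : A) ∈ centerSet A ∧
      (∀ x ∈ centerSet A, ∀ y ∈ centerSet A, x + y ∈ centerSet A) ∧
      (∀ x ∈ centerSet A, -x ∈ centerSet A) ∧
      (∀ z ∈ centerSet A, ∀ a : A, a * z ∈ centerSet A ∧ z * a ∈ centerSet A) := by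
  have key : ∀ c a b : A, c * (a * b) = c * (b * a) := by
    intro c a b
    have h := hcomm a b
    rw [hrad] at h
    have := h c
    rw [mul_sub] at this
    exact sub_eq_zero.mp this
  refine ⟨?_, ?_, ?_, ?_, ?_⟩
  · have : centerSet A = ⋂ a : A, {z : A | a * z = z * a} := by
      ext z; simp [centerSet, Set.mem_iInter]
    rw [this]
    exact isClosed_iInter fun a =>
      isClosed_eq (continuous_const.mul continuous_id) (continuous_id.mul continuous_const)
  · intro a; simp
  · intro x hx y hy a; simp [mul_add, add_mul, hx a, hy a]
  · intro x hx a; simp [hx a]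
  · intro z hz a
    have main : a * z ∈ centerSet A := by
      intro b
      calc b * (a * z) = (b * a) * z := by rw [mul_assoc]
        _ = z * (b * a) := hz (b * a)
        _ = z * (a * b) := key z b a
        _ = (a * b) * z := (hz (a * b)).symm
        _ = a * (b * z) := by rw [mul_assoc]
        _ = a * (z * b) := by rw [hz b]
        _ = (a * z) * b := by rw [mul_assoc]
    refine ⟨main, ?_⟩
    rw [← hz a]; exact main
end

section
/- Let A be a Banach algebra with rad(A) = rann(A) and A/rad(A) commutative, with a right identity e, and let z ∈ A. Then the following are equivalent: (i) the left multiplication map L_z(a) = za is centralizing ([L_z(a), a] ∈ Z(A) for all a); (ii) L_z is skew centralizing (⟨L_z(a), a⟩ ∈ Z(A) for all a); (iii) z ∈ Z(A). -/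
open scoped ENNReal

theorem left_multiplication_centralizing_tfae {A : Type*} [NonUnitalNormedRing A] [NormedSpace ℂ A]
    [IsScalarTower ℂ A A] [SMulCommClass ℂ A A] [CompleteSpace A]
    (hrad : radSet A = rannSet A)
    (hcomm : ∀ a b : A, a * b - b * a ∈ radSet A)
    (e : A) (he : ∀ a : A, a * e = a)
    (z : A) :
    List.TFAE
      [ ∀ a : A, (z * a) * a - a * (z * a) ∈ centerSet A,
        ∀ a : A, (z * a) * a + a * (z * a) ∈ centerSet A,
        z ∈ centerSet A ] := by
  -- commutators lie in the right annihilator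
  have hswap : ∀ a b c : A, c * (a * b) = c * (b * a) := by
    intro a b c
    have h := hcomm a b
    rw [hrad] at h
    have h' := h c
    rw [mul_sub, sub_eq_zero] at h'
    exact h'
  have hZsub : ∀ u v : A, u ∈ centerSet A → v ∈ centerSet A → u - v ∈ centerSet A := by
    intro u v hu hv b
    rw [mul_sub, sub_mul, hu b, hv b]
  -- (iii) → (i)
  have h31 : z ∈ centerSet A → ∀ a : A, (z * a) * a - a * (z * a) ∈ centerSet A := by
    intro hz a
    have h0 : (z * a) * a - a * (z * a) = 0 := by
      rw [← mul_assoc, hz a, sub_self]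
    rw [h0]
    intro b
    rw [mul_zero, zero_mul]
  -- (iii) → (ii)
  have h32 : z ∈ centerSet A → ∀ a : A, (z * a) * a + a * (z * a) ∈ centerSet A := by
    intro hz a b
    have key : b * (z * a * a) = z * a * a * b := by
      have e1 : b * (z * a * a) = b * (a * a) * z := by
        rw [mul_assoc z a a, ← hz (a * a), ← mul_assoc]
      have e2 : z * a * a * b = b * (a * a) * z := by
        rw [mul_assoc z a a, mul_assoc z (a * a) b, hswap (a * a) b z, ← hz (b * (a * a))]
      rw [e1, e2]
    have key2 : b * (a * (z * a)) = a * (z * a) * b := by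
      rw [← mul_assoc a z a, hz a]
      exact key
    rw [mul_add, add_mul, key, key2]
  -- (i) → (iii)
  have h13 : (∀ a : A, (z * a) * a - a * (z * a) ∈ centerSet A) → z ∈ centerSet A := by
    intro h1
    have hp : ∀ x : A, (z * x) * x - x * (z * x) = 0 := by
      intro x
      have hw := h1 x
      have hc : e * ((z * x) * x - x * (z * x)) = 0 := by
        rw [mul_sub, hswap (z * x) x e, sub_self]
      have h0 : ((z * x) * x - x * (z * x)) * e = 0 := by rw [← hw e, hc]
      rwa [he] at h0
    have hp' : ∀ x : A, (z * x - x * z) * x = 0 := by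
      intro x
      have := hp x
      rw [sub_mul, mul_assoc x z x]
      exact this
    have hez : e * z = z := by
      have := hp' e
      rw [he] at this
      rw [he] at this
      -- this : z - e * z = 0
      have : z - e * z = 0 := this
      rw [sub_eq_zero] at this
      exact this.symm
    intro a
    have h3 : z * (a + e) - (a + e) * z = z * a - a * z := by
      rw [mul_add, add_mul, he, hez]
      abel
    have h1' := hp' (a + e)
    rw [h3, mul_add, hp' a, he, zero_add, sub_eq_zero] at h1'
    exact h1'.symm
  -- (ii) → (iii)
  have h23 : (∀ a : A, (z * a) * a + a * (z * a) ∈ centerSet A) → z ∈ centerSet A := by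
    intro h2
    have hez : e * z = z := by
      have ht := h2 e
      rw [he, he] at ht
      -- ht : z + e * z ∈ centerSet A
      have heq := ht e
      rw [he] at heq
      -- heq : e * (z + e * z) = z + e * z
      rw [mul_add, ← mul_assoc, he] at heq
      -- heq : e * z + e * z = z + e * z
      exact add_right_cancel heq
    have h3 : ∀ x : A, e * (z * x) = z * x := by
      intro x
      rw [← mul_assoc, hez]
    have hq : ∀ a : A, z * a + z * a + z * a + a * z ∈ centerSet A := by
      intro a
      have h₁ := hZsub _ _ (hZsub _ _ (h2 (a + e)) (h2 a)) (h2 e)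
      have hexp : ((z * (a + e)) * (a + e) + (a + e) * (z * (a + e))
          - ((z * a) * a + a * (z * a))) - ((z * e) * e + e * (z * e))
          = z * a + z * a + z * a + a * z := by
        simp only [mul_add, add_mul, he, hez, h3]
        abel
      rwa [hexp] at h₁
    have h4z : z + z + z + z ∈ centerSet A := by
      have := hq e
      rwa [he, hez] at this
    intro b
    have hb := h4z b
    rw [mul_add, mul_add, mul_add, add_mul, add_mul, add_mul] at hb
    have hd : (b * z - z * b) + (b * z - z * b) + (b * z - z * b) + (b * z - z * b) = 0 := by
      have hsub := sub_eq_zero_of_eq hb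
      calc (b * z - z * b) + (b * z - z * b) + (b * z - z * b) + (b * z - z * b)
          = (b * z + b * z + b * z + b * z) - (z * b + z * b + z * b + z * b) := by abel
        _ = 0 := hsub
    set d := b * z - z * b with hdef
    have h4s : (4 : ℂ) • d = 0 := by
      have hsm : ((1 : ℂ) + 1 + 1 + 1) • d = d + d + d + d := by
        rw [add_smul, add_smul, add_smul, one_smul]
      rw [show (4 : ℂ) = 1 + 1 + 1 + 1 by norm_num, hsm, hd]
    have hd0 : d = 0 := by
      have : d = (4 : ℂ)⁻¹ • ((4 : ℂ) • d) := by
        rw [smul_smul]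
        norm_num
      rw [this, h4s, smul_zero]
    have := sub_eq_zero.mp hd0
    exact this
  tfae_have 1 → 3 := h13
  tfae_have 3 → 1 := h31
  tfae_have 2 → 3 := h23
  tfae_have 3 → 2 := h32
  tfae_finish
end

section
/- Let A be a Banach algebra with rad(A) = rann(A) and A/rad(A) commutative, and let T be a left multiplier of A (T(ab) = T(a)b for all a, b). Then T(A) ⊆ rad(A) if and only if T is spectrally infinitesimal (r(T(a)) = 0 for all a). -/
open scoped ENNReal

/-!
An element `x` of a unital ring is in the Jacobson radical iff `y * x + 1` is invertible for
every `y`; hence radical elements have spectrum in `{0}`. Conversely, if `x * y` is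
quasinilpotent for every `y`, then `-1 ∉ σ (x * y)`, and since `σ (x * y)` and `σ (y * x)` agree
away from `0`, every `y * x + 1` is invertible, so `x` is radical. For a left multiplier `T` the
products `T a * y` in the unitization are again values of `T`, namely `T (λ a + a b)`.
-/

namespace Ideal

variable {R : Type*} [Ring R]

theorem mem_jacobson_bot_iff_forall_isUnit_mul_add_one {x : R} :
    x ∈ jacobson (⊥ : Ideal R) ↔ ∀ y, IsUnit (y * x + 1) := by
  have exists_left_inv : x ∈ jacobson ⊥ → ∀ y, ∃ z, z * (y * x + 1) = 1 := fun hx y => by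
    obtain ⟨z, hz⟩ := mem_jacobson_iff.mp hx y
    refine ⟨z, ?_⟩
    rwa [mem_bot, sub_eq_zero, mul_assoc, ← mul_add_one] at hz
  refine ⟨fun hx y => ?_, fun h => mem_jacobson_iff.mpr fun y => ?_⟩
  · obtain ⟨z, hz⟩ := exists_left_inv hx y
    -- `z = -(z * y) * x + 1` is itself left invertible, so it is a unit with inverse `y * x + 1`.
    obtain ⟨w, hw⟩ := exists_left_inv hx (-(z * y))
    have hz' : -(z * y) * x + 1 = z := by
      rw [← hz]; noncomm_ring
    rw [hz'] at hw
    have hw_eq : w = y * x + 1 := left_inv_eq_right_inv hw hz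
    exact ⟨⟨y * x + 1, z, hw_eq ▸ hw, hz⟩, rfl⟩
  · obtain ⟨u, hu⟩ := h y
    refine ⟨↑u⁻¹, ?_⟩
    rw [mem_bot, mul_assoc, ← mul_add_one, ← hu, Units.inv_mul, sub_self]

end Ideal

namespace spectrum

open Ideal

variable {𝕜 A : Type*} [Ring A]

theorem neg_one_notMem_iff [CommRing 𝕜] [Algebra 𝕜 A] {a : A} :
    (-1 : 𝕜) ∉ spectrum 𝕜 a ↔ IsUnit (a + 1) := by
  rw [notMem_iff, map_neg, map_one, ← neg_add', IsUnit.neg_iff, add_comm]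

theorem subset_singleton_zero_of_mem_jacobson_bot [Field 𝕜] [Algebra 𝕜 A] {x : A}
    (hx : x ∈ jacobson (⊥ : Ideal A)) : spectrum 𝕜 x ⊆ {0} := by
  intro k hk
  rw [Set.mem_singleton_iff]
  by_contra hk0
  let r : 𝕜ˣ := Units.mk0 (-k⁻¹) (neg_ne_zero.mpr (inv_ne_zero hk0))
  have hmem : (-1 : 𝕜) ∈ spectrum 𝕜 (r • x) := by
    convert (smul_mem_smul_iff (r := r)).mpr hk using 1
    simp [r, hk0]
  refine neg_one_notMem_iff.mpr ?_ hmem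
  rw [Units.smul_def, Algebra.smul_def]
  exact mem_jacobson_bot_iff_forall_isUnit_mul_add_one.mp hx _

variable [NormedField 𝕜] [Algebra 𝕜 A]

theorem spectralRadius_eq_zero_of_mem_jacobson_bot {x : A}
    (hx : x ∈ jacobson (⊥ : Ideal A)) : spectralRadius 𝕜 x = 0 := by
  refine le_antisymm (iSup₂_le fun k hk => ?_) bot_le
  rw [subset_singleton_zero_of_mem_jacobson_bot hx hk, nnnorm_zero, ENNReal.coe_zero]

theorem isUnit_add_one_of_spectralRadius_eq_zero {a : A} (ha : spectralRadius 𝕜 a = 0) :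
    IsUnit (a + 1) := by
  have : (-1 : 𝕜) ∈ resolventSet 𝕜 a := mem_resolventSet_of_spectralRadius_lt (by simp [ha])
  exact neg_one_notMem_iff.mp (notMem_iff.mpr this)

theorem mem_jacobson_bot_of_forall_spectralRadius_mul_eq_zero {x : A}
    (h : ∀ y, spectralRadius 𝕜 (x * y) = 0) : x ∈ jacobson (⊥ : Ideal A) := by
  refine mem_jacobson_bot_iff_forall_isUnit_mul_add_one.mpr fun y => ?_
  have hxy : (-1 : 𝕜) ∉ spectrum 𝕜 (x * y) :=
    neg_one_notMem_iff.mpr (isUnit_add_one_of_spectralRadius_eq_zero (h y))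
  rw [← neg_one_notMem_iff (𝕜 := 𝕜)]
  simpa using (unit_mem_mul_comm (r := -1)).not.mp hxy

end spectrum

theorem Unitization.inr_map_mul_eq_inr_map {R A : Type*} [CommRing R] [NonUnitalRing A]
    [Module R A] [IsScalarTower R A A] [SMulCommClass R A A] {T : A →ₗ[R] A}
    (hT : ∀ a b : A, T (a * b) = T a * b) (a : A) (y : Unitization R A) :
    (T a : Unitization R A) * y = ↑(T (y.fst • a + a * y.snd)) := by
  conv_lhs => rw [← Unitization.inl_fst_add_inr_snd_eq y]
  rw [mul_add, Unitization.inr_mul_inl, ← Unitization.inr_mul R, ← Unitization.inr_add,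
    map_add, map_smul, hT]

theorem left_multiplier_radical_iff_spectrally_infinitesimal_general {A : Type*} [NonUnitalNormedRing A] [NormedSpace ℂ A]
    [IsScalarTower ℂ A A] [SMulCommClass ℂ A A]
    (T : A →ₗ[ℂ] A) (hT : ∀ a b : A, T (a * b) = T a * b) :
    (∀ a : A, T a ∈ radSet A) ↔ (∀ a : A, sprad (T a) = 0) := by
  refine ⟨fun h a => spectrum.spectralRadius_eq_zero_of_mem_jacobson_bot (h a), fun h a => ?_⟩
  refine spectrum.mem_jacobson_bot_of_forall_spectralRadius_mul_eq_zero (𝕜 := ℂ) fun y => ?_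
  rw [Unitization.inr_map_mul_eq_inr_map hT]
  exact h _

theorem left_multiplier_radical_iff_spectrally_infinitesimal {A : Type*} [NonUnitalNormedRing A] [NormedSpace ℂ A]
    [IsScalarTower ℂ A A] [SMulCommClass ℂ A A] [CompleteSpace A]
    (hrad : radSet A = rannSet A)
    (hcomm : ∀ a b : A, a * b - b * a ∈ radSet A)
    (T : A →ₗ[ℂ] A) (hT : ∀ a b : A, T (a * b) = T a * b) :
    (∀ a : A, T a ∈ radSet A) ↔ (∀ a : A, sprad (T a) = 0) :=
  left_multiplier_radical_iff_spectrally_infinitesimal_general T hT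
end

section
/- Let G be a locally compact group and X a left introverted subspace of VN(G) with C*_λ(G) ⊆ X and A(G)·X ⊆ C*_λ(G). Let π: X* → B_λ(G) = C*_λ(G)* be the restriction map. Then ker π = rann(X*) and rad(X*) = rann(X*); in particular X*/rad(X*) is isometrically isomorphic to the commutative semisimple Banach algebra B_λ(G). -/
open scoped Topology

/-- The right action of a commutative Banach algebra `A` on its dual:
`(x · a) b = x (a * b)`. -/
noncomputable def ract {A : Type*} [NormedCommRing A] [NormedAlgebra ℂ A]
    (x : A →L[ℂ] ℂ) (a : A) : A →L[ℂ] ℂ :=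
  x.comp (ContinuousLinearMap.mul ℂ A a)

/-- Left quasi-regularity for a raw (possibly non-unital, non-instance) multiplication. -/
def LeftQuasiReg {M : Type*} [AddCommGroup M] (mul : M → M → M) (x : M) : Prop :=
  ∃ y : M, y + x - mul y x = 0

/-- The Jacobson radical of a possibly non-unital algebra given by a raw
multiplication: `a` is in the radical iff every element of the principal left
ideal generated by `a` is left quasi-regular. -/
def radOf {M : Type*} [AddCommGroup M] (mul : M → M → M) : Set M :=
  {a : M | ∀ (b : M) (n : ℤ), LeftQuasiReg mul (mul b a + n • a)}

/-- The right annihilator for a raw multiplication. -/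
def rannOf {M : Type*} [Zero M] (mul : M → M → M) : Set M :=
  {c : M | ∀ m : M, mul m c = 0}

/-- Abstract formalization of the setting of the paper, for a locally compact group `G`:
`A` plays the role of the Fourier algebra `A(G)` (a commutative Banach algebra), its
dual `A →L[ℂ] ℂ` plays the role of `VN(G)`, `X` is a left introverted subspace of
`VN(G)` (embedded via the isometry `ιX`) with `C*_λ(G) ⊆ X` and `A(G) · X ⊆ C*_λ(G)`,
where `C` plays the role of `C*_λ(G)` (embedded in `X` via the isometry `ιC`), whose
dual `B_λ(G) = C →L[ℂ] ℂ` with its (pointwise = Arens) product `mulC` is a commutative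
semisimple Banach algebra.  `mul` is the Arens product on `X* = X →L[ℂ] ℂ` determined
by the introversion data `dot`, and `π : X* → B_λ(G)` is the restriction map.
Conclusion: `ker π = rann(X*)`, `rad(X*) = rann(X*)`, and `X*/rad(X*)` is isometrically
isomorphic to `B_λ(G)` via `π` (i.e. `π` is onto and the quotient norm of
`m + rad(X*)` equals `‖π m‖`). -/
theorem kernel_eq_rann_and_rad_eq_rann_and_quotient_isometric_to_Blambda
    {A : Type*} [NormedCommRing A] [NormedAlgebra ℂ A] [CompleteSpace A]
    {X C : Type*} [NormedAddCommGroup X] [NormedSpace ℂ X] [CompleteSpace X]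
    [NormedAddCommGroup C] [NormedSpace ℂ C] [CompleteSpace C]
    -- `C ⊆ X ⊆ VN(G) = A(G)*`, isometrically
    (ιX : X →L[ℂ] (A →L[ℂ] ℂ)) (hιX : Isometry ιX)
    (ιC : C →L[ℂ] X) (hιC : Isometry ιC)
    -- `A(G) · X ⊆ C*_λ(G)`: the action `x · a` lands in `C`
    (act : X → A → C)
    (hact : ∀ (x : X) (a : A), ιX (ιC (act x a)) = ract (ιX x) a)
    -- the Arens-type action and product on `X*` (`X` is introverted)
    (dot : (X →L[ℂ] ℂ) → X → X)
    (hdot : ∀ (n : X →L[ℂ] ℂ) (x : X) (a : A), ιX (dot n x) a = n (ιC (act x a)))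
    (mul : (X →L[ℂ] ℂ) → (X →L[ℂ] ℂ) → (X →L[ℂ] ℂ))
    (hmul : ∀ (m n : X →L[ℂ] ℂ) (x : X), mul m n x = m (dot n x))
    -- the Arens-type action and product on `B_λ(G) = C*` (`C` is introverted)
    (dotC : (C →L[ℂ] ℂ) → C → C)
    (hdotC : ∀ (q : C →L[ℂ] ℂ) (c : C) (a : A),
      ιX (ιC (dotC q c)) a = q (act (ιC c) a))
    (mulC : (C →L[ℂ] ℂ) → (C →L[ℂ] ℂ) → (C →L[ℂ] ℂ))
    (hmulC : ∀ (p q : C →L[ℂ] ℂ) (c : C), mulC p q c = p (dotC q c))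
    -- `B_λ(G)` is commutative and semisimple
    (hBcomm : ∀ p q : C →L[ℂ] ℂ, mulC p q = mulC q p)
    (hBss : radOf mulC = {0})
    -- the restriction map `π : X* → B_λ(G)`
    (π : (X →L[ℂ] ℂ) → (C →L[ℂ] ℂ))
    (hπ : ∀ (m : X →L[ℂ] ℂ) (c : C), π m c = m (ιC c))
    -- `π` is an algebra homomorphism
    (hπmul : ∀ m n : X →L[ℂ] ℂ, π (mul m n) = mulC (π m) (π n))
    -- `C*_λ(G) · A(G)` is norm-dense in `C*_λ(G)`
    (hdense : Set.range (fun c : C => ιX (ιC c)) ⊆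
      closure {y : A →L[ℂ] ℂ | ∃ (c : C) (a : A), y = ract (ιX (ιC c)) a}) :
    {m : X →L[ℂ] ℂ | π m = 0} = rannOf mul ∧
      radOf mul = rannOf mul ∧
      Function.Surjective π ∧
      ∀ m : X →L[ℂ] ℂ, ‖π m‖ = sInf ((fun r => ‖m + r‖) '' rannOf mul) := by
  -- basic facts about the isometries
  have hXinj : Function.Injective ιX := hιX.injective
  have hCnorm : ∀ c : C, ‖ιC c‖ = ‖c‖ := fun c => by
    simpa [dist_eq_norm] using hιC.dist_eq c 0
  -- integer smul applied
  have hzsX : ∀ (n : ℤ) (f : X →L[ℂ] ℂ) (z : X), (n • f) z = (n : ℂ) * f z := by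
    intro n f z
    rw [← Int.cast_smul_eq_zsmul ℂ n f, ContinuousLinearMap.smul_apply, smul_eq_mul]
  have hzsC : ∀ (n : ℤ) (f : C →L[ℂ] ℂ) (z : C), (n • f) z = (n : ℂ) * f z := by
    intro n f z
    rw [← Int.cast_smul_eq_zsmul ℂ n f, ContinuousLinearMap.smul_apply, smul_eq_mul]
  -- π is linear
  have hπ0 : π 0 = 0 := by ext c; simp [hπ]
  have hπadd : ∀ f g : X →L[ℂ] ℂ, π (f + g) = π f + π g := by
    intro f g; ext c; simp [hπ]
  have hπsub : ∀ f g : X →L[ℂ] ℂ, π (f - g) = π f - π g := by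
    intro f g; ext c; simp [hπ]
  have hπzsmul : ∀ (n : ℤ) (f : X →L[ℂ] ℂ), π (n • f) = n • π f := by
    intro n f; ext c
    rw [hπ, hzsX, hzsC, hπ]
  -- if m kills C·A then dot m · = 0
  have hdot_zero : ∀ m : X →L[ℂ] ℂ, (∀ (x : X) (a : A), m (ιC (act x a)) = 0) →
      ∀ x, dot m x = 0 := by
    intro m h x
    apply hXinj
    rw [map_zero]
    ext a
    rw [hdot, h x a, ContinuousLinearMap.zero_apply]
  -- if m ∈ rann then dot m · = 0
  have rann_dot : ∀ m : X →L[ℂ] ℂ, (∀ n, mul n m = 0) → ∀ x, dot m x = 0 := by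
    intro m h x
    apply NormedSpace.eq_zero_of_forall_dual_eq_zero ℂ
    intro n
    have h2 := congrArg (fun f : X →L[ℂ] ℂ => f x) (h n)
    simpa [hmul] using h2
  -- if dot m · = 0 then π m = 0 (density argument)
  have dot_pi : ∀ m : X →L[ℂ] ℂ, (∀ x, dot m x = 0) → π m = 0 := by
    intro m h
    have hz : ∀ (x : X) (a : A), m (ιC (act x a)) = 0 := by
      intro x a
      rw [← hdot m x a, h x, map_zero, ContinuousLinearMap.zero_apply]
    ext c
    rw [hπ]
    have hcl := hdense ⟨c, rfl⟩
    rw [Metric.mem_closure_iff] at hcl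
    have hb : ∀ ε > (0:ℝ), ‖m (ιC c)‖ ≤ ‖m‖ * ε := by
      intro ε hε
      obtain ⟨y, hyS, hy⟩ := hcl ε hε
      obtain ⟨c', a, rfl⟩ := hyS
      rw [← hact] at hy
      rw [hιX.dist_eq] at hy
      calc ‖m (ιC c)‖ = ‖m (ιC c) - m (ιC (act (ιC c') a))‖ := by
            rw [hz, sub_zero]
        _ = ‖m (ιC c - ιC (act (ιC c') a))‖ := by rw [map_sub]
        _ ≤ ‖m‖ * ‖ιC c - ιC (act (ιC c') a)‖ := m.le_opNorm _
        _ ≤ ‖m‖ * ε := by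
            refine mul_le_mul_of_nonneg_left ?_ (norm_nonneg m)
            rw [← dist_eq_norm]
            exact le_of_lt hy
    have hle : ‖m (ιC c)‖ ≤ 0 := by
      by_contra hlt
      push_neg at hlt
      have h1 := hb (‖m (ιC c)‖ / (‖m‖ + 1)) (by positivity)
      have hm1 : (0:ℝ) < ‖m‖ + 1 := by positivity
      have key : ‖m‖ * (‖m (ιC c)‖ / (‖m‖ + 1)) < ‖m (ιC c)‖ := by
        rw [mul_div_assoc', div_lt_iff₀ hm1]
        nlinarith [norm_nonneg m]
      linarith
    have h0 : m (ιC c) = 0 := norm_le_zero_iff.mp hle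
    rw [h0, ContinuousLinearMap.zero_apply]
  -- kernel = right annihilator
  have hker : {m : X →L[ℂ] ℂ | π m = 0} = rannOf mul := by
    ext m
    simp only [Set.mem_setOf_eq, rannOf]
    constructor
    · intro hm n
      have hz : ∀ (x : X) (a : A), m (ιC (act x a)) = 0 := by
        intro x a
        have h1 := hπ m (act x a)
        rw [hm] at h1
        simpa using h1.symm
      have hd := hdot_zero m hz
      ext x
      rw [hmul, hd x, map_zero, ContinuousLinearMap.zero_apply]
    · intro hm
      exact dot_pi m (rann_dot m hm)
  -- Hahn-Banach extension: π is surjective, with norm control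
  have hCli : ∀ c : C, ‖(ιC : C →ₗ[ℂ] X) c‖ = ‖c‖ := hCnorm
  let ιC' : C →ₗᵢ[ℂ] X := ⟨(ιC : C →ₗ[ℂ] X), hCli⟩
  let e := ιC'.equivRange
  have hext : ∀ q : C →L[ℂ] ℂ, ∃ g : X →L[ℂ] ℂ, π g = q ∧ ‖g‖ = ‖q‖ := by
    intro q
    let f : (LinearMap.range ιC'.toLinearMap) →L[ℂ] ℂ :=
      q.comp (e.symm.toContinuousLinearEquiv : _ ≃L[ℂ] C).toContinuousLinearMap
    obtain ⟨g, hg, hgn⟩ := exists_extension_norm_eq (LinearMap.range ιC'.toLinearMap) f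
    have hfapp : ∀ x, f x = q (e.symm x) := fun x => rfl
    have hgc : ∀ c : C, g (ιC c) = q c := by
      intro c
      have h1 := hg (e c)
      rw [hfapp, e.symm_apply_apply] at h1
      have h2 : ((e c : LinearMap.range ιC'.toLinearMap) : X) = ιC c := rfl
      rw [h2] at h1
      exact h1
    refine ⟨g, ?_, ?_⟩
    · ext c; rw [hπ]; exact hgc c
    · rw [hgn]
      apply le_antisymm
      · apply ContinuousLinearMap.opNorm_le_bound _ (norm_nonneg q)
        intro x
        rw [hfapp]
        calc ‖q (e.symm x)‖ ≤ ‖q‖ * ‖e.symm x‖ := q.le_opNorm _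
          _ = ‖q‖ * ‖x‖ := by rw [e.symm.norm_map]
      · apply ContinuousLinearMap.opNorm_le_bound _ (norm_nonneg f)
        intro c
        have h3 : q c = f (e c) := by rw [hfapp, e.symm_apply_apply]
        rw [h3]
        calc ‖f (e c)‖ ≤ ‖f‖ * ‖e c‖ := f.le_opNorm _
          _ = ‖f‖ * ‖c‖ := by rw [e.norm_map]
  have hsurj : Function.Surjective π := fun q => (hext q).imp (fun g h => h.1)
  -- radical = right annihilator
  have hrad : radOf mul = rannOf mul := by
    apply Set.Subset.antisymm
    · intro m hm
      have hπm : π m ∈ radOf mulC := by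
        intro q n
        obtain ⟨b, rfl⟩ := hsurj q
        obtain ⟨y, hy⟩ := hm b n
        refine ⟨π y, ?_⟩
        have hz : π (mul b m + n • m) = mulC (π b) (π m) + n • (π m) := by
          rw [hπadd, hπmul, hπzsmul]
        rw [← hz, ← hπmul, ← hπadd, ← hπsub, hy, hπ0]
      have hm0 : π m = 0 := by
        have := hBss ▸ hπm
        simpa using this
      rw [← hker]
      exact hm0
    · intro m hm b n
      have hd : ∀ x, dot m x = 0 := rann_dot m hm
      have h0 : ∀ (x : X) (a : A), m (ιC (act x a)) = 0 := by
        intro x a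
        rw [← hdot m x a, hd x, map_zero, ContinuousLinearMap.zero_apply]
      have hdn : ∀ x, dot (n • m) x = 0 := by
        intro x
        apply hXinj
        rw [map_zero]
        ext a
        rw [hdot, hzsX, h0, mul_zero, ContinuousLinearMap.zero_apply]
      have hmul0 : mul (-(n • m)) (n • m) = 0 := by
        ext x
        rw [hmul, hdn x, map_zero, ContinuousLinearMap.zero_apply]
      rw [hm b, zero_add]
      exact ⟨-(n • m), by rw [hmul0]; simp⟩
  refine ⟨hker, hrad, hsurj, ?_⟩
  -- the quotient norm statement
  have hrann0 : (0 : X →L[ℂ] ℂ) ∈ rannOf mul := by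
    rw [← hker]; exact hπ0
  have hπnorm_le : ∀ f : X →L[ℂ] ℂ, ‖π f‖ ≤ ‖f‖ := by
    intro f
    apply ContinuousLinearMap.opNorm_le_bound _ (norm_nonneg f)
    intro c
    rw [hπ]
    calc ‖f (ιC c)‖ ≤ ‖f‖ * ‖ιC c‖ := f.le_opNorm _
      _ = ‖f‖ * ‖c‖ := by rw [hCnorm]
  intro m
  have hne : ((fun r => ‖m + r‖) '' rannOf mul).Nonempty := ⟨‖m + 0‖, 0, hrann0, rfl⟩
  have hbdd : BddBelow ((fun r => ‖m + r‖) '' rannOf mul) := by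
    refine ⟨0, ?_⟩
    rintro s ⟨r, _, rfl⟩
    exact norm_nonneg _
  apply le_antisymm
  · apply le_csInf hne
    rintro s ⟨r, hr, rfl⟩
    have hπr : π r = 0 := by rw [← hker] at hr; exact hr
    calc ‖π m‖ = ‖π (m + r)‖ := by rw [hπadd, hπr, add_zero]
      _ ≤ ‖m + r‖ := hπnorm_le _
  · obtain ⟨g, hg, hgn⟩ := hext (π m)
    have hgr : g - m ∈ rannOf mul := by
      rw [← hker]
      show π (g - m) = 0
      rw [hπsub, hg, sub_self]
    have hmem : ‖m + (g - m)‖ ∈ (fun r => ‖m + r‖) '' rannOf mul := ⟨g - m, hgr, rfl⟩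
    have h2 := csInf_le hbdd hmem
    calc sInf ((fun r => ‖m + r‖) '' rannOf mul) ≤ ‖m + (g - m)‖ := h2
      _ = ‖g‖ := by rw [add_sub_cancel]
      _ = ‖π m‖ := hgn
end
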